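/- arXiv:2511.12854 — 2 statements merged into one kernel-verified Lean document; each statement's English description precedes it below -/
import Mathlib

section
/- Let B ≥ 2, n ≥ 2, d = ⌈log₂ n / log₂ B⌉, and suppose n^{1/d} is a positive integer. Then the schedule length T = d · (n^{1/d} − 1) · ⌈B / n^{1/d}⌉ satisfies T ≤ (log₂ n / log₂ B + 1) · 2B. -/
/-- Let `B ≥ 2`, `n ≥ 2`, `d = ⌈log₂ n / log₂ B⌉`, and suppose `n^{1/d}` is a positive
integer `m`. Then the schedule length `T = d · (n^{1/d} − 1) · ⌈B / n^{1/d}⌉` satisfies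
`T ≤ (log₂ n / log₂ B + 1) · 2B`. -/
theorem stmt_5 (B : ℝ) (hB : 2 ≤ B) (n : ℕ) (hn : 2 ≤ n)
    (d : ℕ) (hd : d = ⌈Real.logb 2 n / Real.logb 2 B⌉₊)
    (m : ℕ) (hm : 0 < m) (hmd : (m : ℝ) = (n : ℝ) ^ ((1 : ℝ) / d))
    (T : ℕ) (hT : T = d * (m - 1) * ⌈B / m⌉₊) :
    (T : ℝ) ≤ (Real.logb 2 n / Real.logb 2 B + 1) * (2 * B) := by
  have hB0 : (0:ℝ) < B := by linarith
  have hB1 : (1:ℝ) < B := by linarith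
  have hn0 : (0:ℝ) < (n:ℝ) := by exact_mod_cast Nat.lt_of_lt_of_le (by norm_num) hn
  have hn1 : (1:ℝ) < (n:ℝ) := by exact_mod_cast Nat.lt_of_lt_of_le (by norm_num) hn
  set L := Real.logb 2 n with hLdef
  set Lb := Real.logb 2 B with hLbdef
  have hLb : 0 < Lb := Real.logb_pos one_lt_two hB1
  have hL : 0 < L := Real.logb_pos one_lt_two hn1
  have hd1 : 1 ≤ d := by
    rw [hd]; exact Nat.one_le_ceil_iff.mpr (div_pos hL hLb)
  have hd0 : (0:ℝ) < (d:ℝ) := by exact_mod_cast hd1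
  have hdge : L / Lb ≤ (d:ℝ) := hd ▸ Nat.le_ceil _
  have hdlt : (d:ℝ) < L / Lb + 1 := by
    rw [hd]; exact Nat.ceil_lt_add_one (le_of_lt (div_pos hL hLb))
  have hLeq : L ≤ (d:ℝ) * Lb := by
    rw [div_le_iff₀ hLb] at hdge; linarith
  -- log n / log B ≤ d
  have hlog2 : (0:ℝ) < Real.log 2 := Real.log_pos one_lt_two
  have hlogB : (0:ℝ) < Real.log B := Real.log_pos hB1
  have hlogn : Real.log n ≤ (d:ℝ) * Real.log B := by
    have : Real.log n / Real.log 2 ≤ (d:ℝ) * (Real.log B / Real.log 2) := by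
      simpa [hLdef, hLbdef, Real.logb] using hLeq
    rw [div_le_iff₀ hlog2] at this
    calc Real.log n = Real.log n / Real.log 2 * Real.log 2 := by field_simp
      _ ≤ (d:ℝ) * (Real.log B / Real.log 2) * Real.log 2 := by
          exact mul_le_mul_of_nonneg_right (by rw [div_le_iff₀ hlog2] at *; linarith [this]) hlog2.le
      _ = (d:ℝ) * Real.log B := by field_simp
  -- n ≤ B ^ d
  have hnB : (n:ℝ) ≤ B ^ (d:ℝ) := by
    rw [← Real.rpow_logb hB0 (ne_of_gt hB1) hn0]
    apply Real.rpow_le_rpow_left_iff hB1 |>.mpr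
    rw [Real.logb, div_le_iff₀ hlogB]
    linarith
  -- m ≤ B
  have hmB : (m:ℝ) ≤ B := by
    have hmd' : ((m:ℝ)) ^ (d:ℕ) = (n:ℝ) := by
      rw [hmd, ← Real.rpow_natCast ((n:ℝ) ^ ((1:ℝ)/d)) d, ← Real.rpow_mul hn0.le]
      rw [one_div, inv_mul_cancel₀ (ne_of_gt hd0), Real.rpow_one]
    have hBd : B ^ (d:ℝ) = B ^ (d:ℕ) := Real.rpow_natCast B d
    have h : ((m:ℝ)) ^ (d:ℕ) ≤ B ^ (d:ℕ) := by rw [hmd']; rw [← hBd]; exact hnB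
    exact le_of_pow_le_pow_left₀ (by omega) hB0.le h
  have hm1 : (1:ℝ) ≤ (m:ℝ) := by exact_mod_cast hm
  have hmpos : (0:ℝ) < (m:ℝ) := by linarith
  have hceil : (⌈B / (m:ℝ)⌉₊ : ℝ) < B / m + 1 :=
    Nat.ceil_lt_add_one (by positivity)
  have hTcast : (T:ℝ) = (d:ℝ) * ((m:ℝ) - 1) * (⌈B / (m:ℝ)⌉₊ : ℝ) := by
    rw [hT]; push_cast [Nat.cast_sub hm]; ring
  have hBm : (m:ℝ) * (B / m) = B := by field_simp
  have hstep : ((m:ℝ) - 1) * (⌈B / (m:ℝ)⌉₊ : ℝ) ≤ 2 * B := by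
    have h1 : ((m:ℝ) - 1) * (⌈B / (m:ℝ)⌉₊ : ℝ) ≤ ((m:ℝ) - 1) * (B / m + 1) := by
      apply mul_le_mul_of_nonneg_left hceil.le (by linarith)
    have h2 : (0:ℝ) ≤ B / m := by positivity
    nlinarith
  rw [hTcast]
  calc (d:ℝ) * ((m:ℝ) - 1) * (⌈B / (m:ℝ)⌉₊ : ℝ)
      = (d:ℝ) * (((m:ℝ) - 1) * (⌈B / (m:ℝ)⌉₊ : ℝ)) := by ring
    _ ≤ (d:ℝ) * (2 * B) := mul_le_mul_of_nonneg_left hstep hd0.le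
    _ ≤ (L / Lb + 1) * (2 * B) := by
        apply mul_le_mul_of_nonneg_right hdlt.le (by linarith)
end

section
/- Replicating each fractional matching of a feasible schedule four times in sequence yields a schedule in which each sender transmits at most 1/4 unit per (rescaled) time step and each receiver receives at most 1/4 unit per time step, and the total completion time increases by at most a factor of 4. Hence the optimal values of the sender-bound and receiver-bound relaxations (with capacity 1/4 per time step) satisfy OPT^S ≤ 4·OPT and OPT^R ≤ 4·OPT. -/
lemma sum_range_four_mul (T : ℕ) (g : ℕ → ℝ) :
    ∑ t ∈ Finset.range (4 * T), g t =
      ∑ s ∈ Finset.range T, (g (4*s) + g (4*s+1) + g (4*s+2) + g (4*s+3)) := by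
  induction T with
  | zero => simp
  | succ T ih =>
    have : 4 * (T + 1) = (4 * T) + 1 + 1 + 1 + 1 := by ring
    rw [this, Finset.sum_range_succ, Finset.sum_range_succ, Finset.sum_range_succ,
      Finset.sum_range_succ, Finset.sum_range_succ, ih]
    ring

/-- Replicating each fractional matching of a feasible schedule four times yields a
schedule in which each sender transmits at most `1/4` unit per time step and each
receiver receives at most `1/4` unit per time step, still covering the demand `D`
(within `4T` steps), with total completion time at most `4` times the original. Hence
`OPT^S ≤ 4·OPT` and `OPT^R ≤ 4·OPT` for the sender- and receiver-bound relaxations. -/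
theorem stmt_19 (n T : ℕ) (D : Fin n → Fin n → ℝ)
    (x : ℕ → Fin n → Fin n → ℝ) (hx : ∀ t i j, 0 ≤ x t i j)
    (hsend : ∀ t i, ∑ j, x t i j ≤ 1) (hrecv : ∀ t j, ∑ i, x t i j ≤ 1)
    (hcov : ∀ i j, D i j ≤ ∑ t ∈ Finset.range T, x t i j) :
    ∃ y : ℕ → Fin n → Fin n → ℝ,
      (∀ t i j, 0 ≤ y t i j) ∧
      (∀ t i, ∑ j, y t i j ≤ 1 / 4) ∧
      (∀ t j, ∑ i, y t i j ≤ 1 / 4) ∧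
      (∀ i j, D i j ≤ ∑ t ∈ Finset.range (4 * T), y t i j) ∧
      (∑ t ∈ Finset.range (4 * T), ∑ i, ∑ j, ((t : ℝ) + 1) * y t i j) ≤
        4 * ∑ t ∈ Finset.range T, ∑ i, ∑ j, ((t : ℝ) + 1) * x t i j := by
  refine ⟨fun t i j => x (t / 4) i j / 4, ?_, ?_, ?_, ?_, ?_⟩
  · intro t i j; exact div_nonneg (hx _ i j) (by norm_num)
  · intro t i
    rw [← Finset.sum_div]
    have := hsend (t / 4) i
    linarith
  · intro t j
    rw [← Finset.sum_div]
    have := hrecv (t / 4) j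
    linarith
  · intro i j
    refine (hcov i j).trans ?_
    rw [sum_range_four_mul T (fun t => x (t / 4) i j / 4)]
    apply le_of_eq
    apply Finset.sum_congr rfl
    intro s _
    have h0 : (4*s) / 4 = s := by omega
    have h1 : (4*s+1) / 4 = s := by omega
    have h2 : (4*s+2) / 4 = s := by omega
    have h3 : (4*s+3) / 4 = s := by omega
    simp only [h0, h1, h2, h3, ← Finset.sum_add_distrib]
    ring
  · rw [sum_range_four_mul T (fun t => ∑ i, ∑ j, ((t : ℝ) + 1) * (x (t / 4) i j / 4)),
      Finset.mul_sum]
    apply Finset.sum_le_sum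
    intro s _
    have h0 : (4*s) / 4 = s := by omega
    have h1 : (4*s+1) / 4 = s := by omega
    have h2 : (4*s+2) / 4 = s := by omega
    have h3 : (4*s+3) / 4 = s := by omega
    simp only [h0, h1, h2, h3, ← Finset.sum_add_distrib]
    rw [Finset.mul_sum]
    apply Finset.sum_le_sum; intro i _
    rw [Finset.mul_sum]
    apply Finset.sum_le_sum; intro j _
    push_cast
    nlinarith [hx s i j]
end
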